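/- arXiv:1511.01737 — 4 statements merged into one kernel-verified Lean document; each statement's English description precedes it below -/
import Mathlib

section
/- Let f be an analytic vector field on ℝ^d with f(0) = 0 which is globally asymptotically stable at the origin, and let V(x) = xᵀPx with P symmetric positive definite be a weak Lyapunov function for f, i.e. dV(x)·f(x) ≤ 0 for all x ∈ ℝ^d. Then V is strictly decreasing along every nonzero solution of ẋ = f(x): for every x ≠ 0 and every 0 ≤ s < t, V(Φ^t(x)) < V(Φ^s(x)), where Φ^t denotes the flow of f. -/
/-!
Along a trajectory `γ = Φ x`, the function `V ∘ γ` is antitone by the weak Lyapunov inequality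
and tends to `V 0 = 0`. Trajectories of an analytic vector field are real-analytic in time, so
`V ∘ γ` is analytic on `(0, ∞)`. If it took the same value at `s < t` it would be constant on
`(s, t)`, hence by the identity theorem constant on `(0, ∞)` and equal to its limit `0`; but
`γ τ ≠ 0` for small `τ > 0` since `γ 0 = x ≠ 0`, and `P` is positive definite.

Analyticity of trajectories comes from complexification: the Taylor series of `f` at `γ t₀`
extends to a holomorphic `F`, Picard iteration with holomorphic primitives on a disc gives a
holomorphic solution of `w' = F w` in complex time, and by uniqueness of solutions its
restriction to real times is `γ` near `t₀`.
-/

open Filter Set Topology Matrix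

open Metric

theorem ContinuousMultilinearMap.apply_eq_sum_prod_smul_single {R M ι : Type*} [CommSemiring R]
    [TopologicalSpace R] [AddCommMonoid M] [Module R M] [TopologicalSpace M] [Fintype ι]
    [DecidableEq ι] {n : ℕ} (p : ContinuousMultilinearMap R (fun _ : Fin n => ι → R) M)
    (x : Fin n → ι → R) :
    p x = ∑ k : Fin n → ι, (∏ i, x i (k i)) • p fun i => Pi.single (k i) 1 := by
  conv_lhs =>
    rw [show x = fun i => ∑ j, x i j • (Pi.single j 1 : ι → R) by ext; simp [Pi.single_apply]]
  rw [p.map_sum]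
  simp [ContinuousMultilinearMap.map_smul_univ]

theorem FormalMultilinearSeries.radius_pos_of_norm_le_pow_mul {𝕜 𝕜' E F E' F' : Type*}
    [NontriviallyNormedField 𝕜] [NormedAddCommGroup E] [NormedSpace 𝕜 E]
    [NormedAddCommGroup F] [NormedSpace 𝕜 F]
    [NontriviallyNormedField 𝕜'] [NormedAddCommGroup E'] [NormedSpace 𝕜' E']
    [NormedAddCommGroup F'] [NormedSpace 𝕜' F']
    {p : FormalMultilinearSeries 𝕜 E F} {q : FormalMultilinearSeries 𝕜' E' F'}
    (hp : 0 < p.radius) {a : ℝ} (ha : 0 ≤ a) (hq : ∀ n, ‖q n‖ ≤ a ^ n * ‖p n‖) :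
    0 < q.radius := by
  obtain ⟨C, r, hC, hr, hpC⟩ := p.le_mul_pow_of_radius_pos hp
  have hs : 0 < (a * r + 1)⁻¹ := by positivity
  refine (ENNReal.coe_pos.2 (show (0 : NNReal) < ⟨_, hs.le⟩ from hs)).trans_le
    (q.le_radius_of_bound C (r := ⟨_, hs.le⟩) fun n => ?_)
  calc ‖q n‖ * (a * r + 1)⁻¹ ^ n ≤ a ^ n * (C * r ^ n) * (a * r + 1)⁻¹ ^ n := by
        gcongr; exact (hq n).trans (by gcongr; exact hpC n)
    _ = C * (a * r / (a * r + 1)) ^ n := by ring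
    _ ≤ C := mul_le_of_le_one_right hC.le
        (pow_le_one₀ (by positivity) (div_le_one_of_le₀ (by linarith) (by positivity)))

theorem exists_tendstoUniformlyOn_of_dist_le_geometric_two {α E : Type*} [PseudoMetricSpace E]
    [CompleteSpace E] {f : ℕ → α → E} {s : Set α} {C : ℝ}
    (hf : ∀ n, ∀ x ∈ s, dist (f n x) (f (n + 1) x) ≤ C / 2 / 2 ^ n) :
    ∃ g : α → E, TendstoUniformlyOn f g atTop s := by
  let g (x : α) : E := haveI : Nonempty E := ⟨f 0 x⟩; limUnder atTop (f · x)
  have hlim (x) (hx : x ∈ s) : Tendsto (f · x) atTop (𝓝 (g x)) :=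
    haveI : Nonempty E := ⟨f 0 x⟩; (cauchySeq_of_le_geometric_two (hf · x hx)).tendsto_limUnder
  refine ⟨g, Metric.tendstoUniformlyOn_iff.2 fun ε hε => ?_⟩
  have hC : Tendsto (fun n : ℕ => C / 2 ^ n) atTop (𝓝 0) :=
    tendsto_const_nhds.div_atTop (tendsto_pow_atTop_atTop_of_one_lt one_lt_two)
  filter_upwards [hC.eventually (gt_mem_nhds hε)] with n hn x hx
  rw [dist_comm]
  exact (dist_le_of_le_geometric_two_of_tendsto (hf · x hx) (hlim x hx) n).trans_lt hn

section Complexification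

variable {ι κ : Type*}

variable (ι) in
noncomputable def Pi.ofRealCLM : (ι → ℝ) →L[ℝ] (ι → ℂ) :=
  ContinuousLinearMap.pi fun i => Complex.ofRealCLM.comp (ContinuousLinearMap.proj i)

variable (ι) in
noncomputable def Pi.reCLM : (ι → ℂ) →L[ℝ] (ι → ℝ) :=
  ContinuousLinearMap.pi fun i => Complex.reCLM.comp (ContinuousLinearMap.proj i)

@[simp] theorem Pi.ofRealCLM_apply (x : ι → ℝ) (i : ι) : Pi.ofRealCLM ι x i = x i := rfl

@[simp] theorem Pi.reCLM_apply (z : ι → ℂ) (i : ι) : Pi.reCLM ι z i = (z i).re := rfl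

@[simp] theorem Pi.reCLM_ofRealCLM (x : ι → ℝ) : Pi.reCLM ι (Pi.ofRealCLM ι x) = x := by
  ext; simp

theorem Pi.norm_ofRealCLM [Fintype ι] (x : ι → ℝ) : ‖Pi.ofRealCLM ι x‖ = ‖x‖ := by
  simp [Pi.norm_def]

namespace ContinuousMultilinearMap

variable [Fintype ι] [DecidableEq ι] {n : ℕ}

noncomputable def complexify (p : ContinuousMultilinearMap ℝ (fun _ : Fin n => ι → ℝ) (κ → ℝ)) :
    ContinuousMultilinearMap ℂ (fun _ : Fin n => ι → ℂ) (κ → ℂ) :=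
  ∑ k : Fin n → ι,
    (ContinuousMultilinearMap.mkPiRing ℂ (Fin n)
      (Pi.ofRealCLM κ (p fun i => Pi.single (k i) 1))).compContinuousLinearMap
      fun i => ContinuousLinearMap.proj (k i)

theorem complexify_apply (p : ContinuousMultilinearMap ℝ (fun _ : Fin n => ι → ℝ) (κ → ℝ))
    (z : Fin n → ι → ℂ) :
    p.complexify z =
      ∑ k : Fin n → ι, (∏ i, z i (k i)) • Pi.ofRealCLM κ (p fun i => Pi.single (k i) 1) := by
  simp [complexify]

theorem complexify_apply_ofRealCLM
    (p : ContinuousMultilinearMap ℝ (fun _ : Fin n => ι → ℝ) (κ → ℝ)) (x : Fin n → ι → ℝ) :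
    p.complexify (fun i => Pi.ofRealCLM ι (x i)) = Pi.ofRealCLM κ (p x) := by
  simp [complexify_apply, p.apply_eq_sum_prod_smul_single x, ← Complex.ofReal_prod]

theorem norm_complexify_le [Fintype κ]
    (p : ContinuousMultilinearMap ℝ (fun _ : Fin n => ι → ℝ) (κ → ℝ)) :
    ‖p.complexify‖ ≤ (Fintype.card ι : ℝ) ^ n * ‖p‖ := by
  refine opNorm_le_bound (by positivity) fun z => ?_
  have hterm (k : Fin n → ι) :
      ‖(∏ i, z i (k i)) • Pi.ofRealCLM κ (p fun i => Pi.single (k i) 1)‖ ≤ ‖p‖ * ∏ i, ‖z i‖ := by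
    rw [norm_smul, Pi.norm_ofRealCLM, norm_prod, mul_comm]
    gcongr
    · simpa [Pi.norm_single] using p.le_opNorm fun i => Pi.single (k i) 1
    · exact norm_le_pi_norm (z _) _
  calc ‖p.complexify z‖ ≤ ∑ k : Fin n → ι, ‖p‖ * ∏ i, ‖z i‖ := by
        rw [complexify_apply]; exact norm_sum_le_of_le _ fun k _ => hterm k
    _ = _ := by simp [mul_assoc]

end ContinuousMultilinearMap

theorem AnalyticAt.exists_complexification [Fintype ι] [Fintype κ] {f : (ι → ℝ) → (κ → ℝ)}
    {x₀ : ι → ℝ} (hf : AnalyticAt ℝ f x₀) :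
    ∃ F : (ι → ℂ) → (κ → ℂ), AnalyticAt ℂ F (Pi.ofRealCLM ι x₀) ∧
      ∀ᶠ x in 𝓝 x₀, F (Pi.ofRealCLM ι x) = Pi.ofRealCLM κ (f x) := by
  classical
  obtain ⟨p, hp⟩ := hf
  let q : FormalMultilinearSeries ℂ (ι → ℂ) (κ → ℂ) := fun n => (p n).complexify
  have hq : HasFPowerSeriesAt q.sum q 0 :=
    (q.hasFPowerSeriesOnBall (p.radius_pos_of_norm_le_pow_mul hp.radius_pos (Nat.cast_nonneg _)
      fun n => (p n).norm_complexify_le)).hasFPowerSeriesAt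
  refine ⟨fun z => q.sum (z - Pi.ofRealCLM ι x₀), by
    simpa using hq.analyticAt.comp_sub (Pi.ofRealCLM ι x₀), ?_⟩
  have hsum_q : ∀ᶠ y in 𝓝 (0 : ι → ℝ),
      HasSum (fun n => q n fun _ => Pi.ofRealCLM ι y) (q.sum (Pi.ofRealCLM ι y)) := by
    simpa using
      ((Pi.ofRealCLM ι).continuous.tendsto' 0 0 (map_zero _)).eventually hq.eventually_hasSum
  have hsum_p : ∀ᶠ y in 𝓝 (0 : ι → ℝ),
      HasSum (fun n => q n fun _ => Pi.ofRealCLM ι y) (Pi.ofRealCLM κ (f (x₀ + y))) := by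
    filter_upwards [hp.eventually_hasSum] with y hy
    simpa [q, ← ContinuousMultilinearMap.complexify_apply_ofRealCLM]
      using (Pi.ofRealCLM κ).hasSum hy
  filter_upwards [((continuous_sub_right x₀).tendsto' x₀ 0 (sub_self x₀)).eventually
    (hsum_q.and hsum_p)] with x ⟨hxq, hxp⟩
  simpa [← map_sub] using hxq.unique hxp

end Complexification

namespace Complex

variable {E : Type*} [NormedAddCommGroup E] [NormedSpace ℂ E] {z₀ : ℂ} {δ : ℝ}

theorem norm_sub_le_of_forall_hasDerivAt_ball {g g' : ℂ → E} {C : ℝ}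
    (hg : ∀ z ∈ ball z₀ δ, HasDerivAt g (g' z) z) (hC : ∀ z ∈ ball z₀ δ, ‖g' z‖ ≤ C)
    {z : ℂ} (hz : z ∈ ball z₀ δ) : ‖g z - g z₀‖ ≤ δ * C := by
  have hz₀ : z₀ ∈ ball z₀ δ := mem_ball_self (pos_of_mem_ball hz)
  calc ‖g z - g z₀‖ ≤ C * ‖z - z₀‖ := (convex_ball z₀ δ).norm_image_sub_le_of_norm_hasDerivWithin_le
        (fun z hz => (hg z hz).hasDerivWithinAt) hC hz₀ hz
    _ ≤ C * δ := by
        gcongr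
        · exact (norm_nonneg _).trans (hC z₀ hz₀)
        · exact (mem_ball_iff_norm.1 hz).le
    _ = δ * C := mul_comm _ _

variable [CompleteSpace E]

open Classical in
noncomputable def ballPrimitive (g : ℂ → E) (z₀ : ℂ) (δ : ℝ) : ℂ → E :=
  if h : DifferentiableOn ℂ g (ball z₀ δ) then (h.isExactOn_ball.with_val_at z₀ 0).choose else 0

@[simp] theorem ballPrimitive_self (g : ℂ → E) : ballPrimitive g z₀ δ z₀ = 0 := by
  unfold ballPrimitive
  split_ifs with h
  exacts [(h.isExactOn_ball.with_val_at z₀ 0).choose_spec.1, rfl]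

theorem hasDerivAt_ballPrimitive {g : ℂ → E} (hg : DifferentiableOn ℂ g (ball z₀ δ)) {z : ℂ}
    (hz : z ∈ ball z₀ δ) : HasDerivAt (ballPrimitive g z₀ δ) (g z) z := by
  rw [ballPrimitive, dif_pos hg]
  exact (hg.isExactOn_ball.with_val_at z₀ 0).choose_spec.2 z hz

/-- `u ↦ (z ↦ c + ∫_{z₀}^z F (u ζ) dζ)` on `ball z₀ δ`. -/
noncomputable def picardOperator (F : E → E) (c : E) (z₀ : ℂ) (δ : ℝ) (u : ℂ → E) : ℂ → E :=
  fun z => c + ballPrimitive (F ∘ u) z₀ δ z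

variable {F : E → E} {c : E} {r M : ℝ} {K : NNReal} {u u' : ℂ → E}

@[simp] theorem picardOperator_self : picardOperator F c z₀ δ u z₀ = c := by
  simp [picardOperator]

theorem hasDerivAt_picardOperator (hF : DifferentiableOn ℂ F (closedBall c r))
    (hu : DifferentiableOn ℂ u (ball z₀ δ)) (hur : MapsTo u (ball z₀ δ) (closedBall c r))
    {z : ℂ} (hz : z ∈ ball z₀ δ) : HasDerivAt (picardOperator F c z₀ δ u) (F (u z)) z :=
  (hasDerivAt_ballPrimitive (hF.comp hu hur) hz).const_add c

theorem differentiableOn_picardOperator (hF : DifferentiableOn ℂ F (closedBall c r))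
    (hu : DifferentiableOn ℂ u (ball z₀ δ)) (hur : MapsTo u (ball z₀ δ) (closedBall c r)) :
    DifferentiableOn ℂ (picardOperator F c z₀ δ u) (ball z₀ δ) := fun _ hz =>
  (hasDerivAt_picardOperator hF hu hur hz).differentiableAt.differentiableWithinAt

theorem mapsTo_picardOperator (hF : DifferentiableOn ℂ F (closedBall c r))
    (hM : ∀ y ∈ closedBall c r, ‖F y‖ ≤ M) (hδM : δ * M ≤ r)
    (hu : DifferentiableOn ℂ u (ball z₀ δ)) (hur : MapsTo u (ball z₀ δ) (closedBall c r)) :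
    MapsTo (picardOperator F c z₀ δ u) (ball z₀ δ) (closedBall c r) := fun z hz => by
  have h := norm_sub_le_of_forall_hasDerivAt_ball
    (fun z hz => hasDerivAt_picardOperator hF hu hur hz) (fun z hz => hM _ (hur hz)) hz
  rw [picardOperator_self] at h
  exact mem_closedBall_iff_norm.2 (h.trans hδM)

theorem dist_picardOperator_le (hF : DifferentiableOn ℂ F (closedBall c r))
    (hLip : LipschitzOnWith K F (closedBall c r))
    (hu : DifferentiableOn ℂ u (ball z₀ δ)) (hur : MapsTo u (ball z₀ δ) (closedBall c r))
    (hu' : DifferentiableOn ℂ u' (ball z₀ δ)) (hur' : MapsTo u' (ball z₀ δ) (closedBall c r))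
    {ε : ℝ} (hε : ∀ z ∈ ball z₀ δ, dist (u z) (u' z) ≤ ε) {z : ℂ} (hz : z ∈ ball z₀ δ) :
    dist (picardOperator F c z₀ δ u z) (picardOperator F c z₀ δ u' z) ≤ δ * (K * ε) := by
  have h := norm_sub_le_of_forall_hasDerivAt_ball (C := K * ε)
    (fun z hz => (hasDerivAt_picardOperator hF hu hur hz).sub
      (hasDerivAt_picardOperator hF hu' hur' hz))
    (fun z hz => by
      rw [← dist_eq_norm]
      exact (hLip.dist_le_mul _ (hur hz) _ (hur' hz)).trans (by gcongr; exact hε z hz)) hz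
  simpa [dist_eq_norm] using h

noncomputable def picardIterate (F : E → E) (c : E) (z₀ : ℂ) (δ : ℝ) (n : ℕ) : ℂ → E :=
  (picardOperator F c z₀ δ)^[n] fun _ => c

theorem picardIterate_succ (n : ℕ) :
    picardIterate F c z₀ δ (n + 1) = picardOperator F c z₀ δ (picardIterate F c z₀ δ n) :=
  Function.iterate_succ_apply' _ n _

theorem differentiableOn_and_mapsTo_picardIterate (hr : 0 ≤ r) (hF : DifferentiableOn ℂ F (closedBall c r))
    (hM : ∀ y ∈ closedBall c r, ‖F y‖ ≤ M) (hδM : δ * M ≤ r) (n : ℕ) :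
    DifferentiableOn ℂ (picardIterate F c z₀ δ n) (ball z₀ δ) ∧
      MapsTo (picardIterate F c z₀ δ n) (ball z₀ δ) (closedBall c r) := by
  induction n with
  | zero => exact ⟨differentiableOn_const c, fun _ _ => mem_closedBall_self hr⟩
  | succ n ih =>
    rw [picardIterate_succ]
    exact ⟨differentiableOn_picardOperator hF ih.1 ih.2, mapsTo_picardOperator hF hM hδM ih.1 ih.2⟩

theorem dist_picardIterate_succ_le (hr : 0 ≤ r) (hF : DifferentiableOn ℂ F (closedBall c r))
    (hM : ∀ y ∈ closedBall c r, ‖F y‖ ≤ M) (hLip : LipschitzOnWith K F (closedBall c r))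
    (hδM : δ * M ≤ r) (hδK : δ * K ≤ 1 / 2) (n : ℕ) {z : ℂ} (hz : z ∈ ball z₀ δ) :
    dist (picardIterate F c z₀ δ n z) (picardIterate F c z₀ δ (n + 1) z) ≤ 2 * r / 2 / 2 ^ n := by
  induction n generalizing z with
  | zero => simpa [picardIterate, mem_closedBall, dist_comm] using
      (differentiableOn_and_mapsTo_picardIterate hr hF hM hδM 1).2 hz
  | succ n ih =>
    have hn := differentiableOn_and_mapsTo_picardIterate (z₀ := z₀) hr hF hM hδM n
    have hn' := differentiableOn_and_mapsTo_picardIterate (z₀ := z₀) hr hF hM hδM (n + 1)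
    have h := dist_picardOperator_le hF hLip hn.1 hn.2 hn'.1 hn'.2 (fun z hz => ih hz) hz
    rw [← picardIterate_succ, ← picardIterate_succ] at h
    refine h.trans ?_
    rw [pow_succ, ← div_div]
    have : 0 ≤ 2 * r / 2 / 2 ^ n := by positivity
    nlinarith

theorem exists_forall_hasDerivAt_ball (hr : 0 ≤ r) (hF : DifferentiableOn ℂ F (closedBall c r))
    (hM : ∀ y ∈ closedBall c r, ‖F y‖ ≤ M) (hLip : LipschitzOnWith K F (closedBall c r))
    (hδM : δ * M ≤ r) (hδK : δ * K ≤ 1 / 2) :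
    ∃ w : ℂ → E, w z₀ = c ∧ ∀ z ∈ ball z₀ δ, HasDerivAt w (F (w z)) z := by
  set T := picardOperator F c z₀ δ
  have hu := differentiableOn_and_mapsTo_picardIterate (z₀ := z₀) hr hF hM hδM
  obtain ⟨w, hw⟩ := exists_tendstoUniformlyOn_of_dist_le_geometric_two
    (f := picardIterate F c z₀ δ) (s := ball z₀ δ)
    fun n _ hz => dist_picardIterate_succ_le hr hF hM hLip hδM hδK n hz
  have hwd : DifferentiableOn ℂ w (ball z₀ δ) :=
    hw.tendstoLocallyUniformlyOn.differentiableOn (Eventually.of_forall fun n => (hu n).1)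
      isOpen_ball
  have hwr : MapsTo w (ball z₀ δ) (closedBall c r) := fun z hz =>
    isClosed_closedBall.mem_of_tendsto (hw.tendsto_at hz)
      (Eventually.of_forall fun n => (hu n).2 hz)
  have hTw :
      TendstoUniformlyOn (fun n => T (picardIterate F c z₀ δ n)) (T w) atTop (ball z₀ δ) := by
    rw [Metric.tendstoUniformlyOn_iff] at hw ⊢
    intro ε hε
    filter_upwards [hw ε hε] with n hn z hz
    refine (dist_picardOperator_le hF hLip hwd hwr (hu n).1 (hu n).2 (fun z hz => (hn z hz).le)
      hz).trans_lt ?_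
    nlinarith
  -- `w` is a fixed point of `T` on the ball, so `T w` solves the ODE and starts at `c`
  have hfix : EqOn (T w) w (ball z₀ δ) := fun z hz =>
    tendsto_nhds_unique (hTw.tendsto_at hz)
      (by simpa only [Function.comp_def, picardIterate_succ] using
        (hw.tendsto_at hz).comp (tendsto_add_atTop_nat 1))
  refine ⟨T w, picardOperator_self, fun z hz => ?_⟩
  rw [hfix hz]
  exact hasDerivAt_picardOperator hF hwd hwr hz

end Complex

theorem AnalyticAt.exists_eventually_hasDerivAt {E : Type*} [NormedAddCommGroup E]
    [NormedSpace ℂ E] [CompleteSpace E] {F : E → E} {c : E} (hF : AnalyticAt ℂ F c) (z₀ : ℂ) :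
    ∃ w : ℂ → E, w z₀ = c ∧ ∀ᶠ z in 𝓝 z₀, HasDerivAt w (F (w z)) z := by
  obtain ⟨K, t, ht, hLip⟩ := (hF.contDiffAt (n := 1)).exists_lipschitzOnWith
  obtain ⟨r, hr, hrt⟩ := nhds_basis_closedBall.mem_iff.1 (inter_mem ht hF.eventually_analyticAt)
  have hM (y) (hy : y ∈ closedBall c r) : ‖F y‖ ≤ ‖F c‖ + K * r := by
    have h := (hLip.mono fun y hy => (hrt hy).1).dist_le_mul y hy c (mem_closedBall_self hr.le)
    rw [dist_eq_norm, dist_eq_norm] at h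
    calc ‖F y‖ ≤ ‖F c‖ + ‖F y - F c‖ := norm_le_norm_add_norm_sub' _ _
      _ ≤ ‖F c‖ + K * r := by gcongr; exact h.trans (by gcongr; exact mem_closedBall_iff_norm.1 hy)
  have hδ : ∀ᶠ δ in 𝓝 (0 : ℝ), δ * (‖F c‖ + K * r) ≤ r ∧ δ * K ≤ 1 / 2 :=
    (((continuous_mul_const _).tendsto' 0 0 (zero_mul _)).eventually (ge_mem_nhds hr)).and
      (((continuous_mul_const _).tendsto' 0 0 (zero_mul _)).eventually (ge_mem_nhds one_half_pos))
  obtain ⟨δ, hδ, hδM, hδK⟩ := hδ.exists_gt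
  obtain ⟨w, hw₀, hw⟩ := Complex.exists_forall_hasDerivAt_ball (z₀ := z₀) hr.le
    (fun y hy => (hrt hy).2.differentiableAt.differentiableWithinAt) hM
    (hLip.mono fun y hy => (hrt hy).1) hδM hδK
  exact ⟨w, hw₀, eventually_of_mem (ball_mem_nhds z₀ hδ) hw⟩

theorem IsIntegralCurveAt.analyticAt {ι : Type*} [Fintype ι] {f : (ι → ℝ) → (ι → ℝ)}
    {γ : ℝ → ι → ℝ} {t₀ : ℝ} (hγ : IsIntegralCurveAt γ (fun _ => f) t₀)
    (hf : AnalyticAt ℝ f (γ t₀)) : AnalyticAt ℝ γ t₀ := by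
  obtain ⟨F, hF, hFf⟩ := hf.exists_complexification
  obtain ⟨w, hw₀, hw⟩ := hF.exists_eventually_hasDerivAt (t₀ : ℂ)
  obtain ⟨K, s, hs, hLip⟩ := (hF.contDiffAt (n := 1)).exists_lipschitzOnWith
  have hwℝ : ∀ᶠ t : ℝ in 𝓝 t₀, HasDerivAt (fun t : ℝ => w t) (F (w t)) t :=
    (Complex.continuous_ofReal.tendsto t₀).eventually hw |>.mono fun t ht => by
      simpa [Function.comp_def] using (ht.hasFDerivAt.restrictScalars ℝ).comp_hasDerivAt t
        Complex.ofRealCLM.hasDerivAt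
  have hγℂ : ∀ᶠ t in 𝓝 t₀,
      HasDerivAt (fun t => Pi.ofRealCLM ι (γ t)) (F (Pi.ofRealCLM ι (γ t))) t := by
    filter_upwards [hγ, hγ.self_of_nhds.continuousAt.eventually hFf] with t ht hFt
    rw [hFt]
    exact (Pi.ofRealCLM ι).hasFDerivAt.comp_hasDerivAt t ht
  have heq : (fun t => Pi.ofRealCLM ι (γ t)) =ᶠ[𝓝 t₀] fun t : ℝ => w t :=
    ODE_solution_unique_of_eventually (v := fun _ => F) (s := fun _ => s)
      (Eventually.of_forall fun _ => hLip)
      (hγℂ.and (hγℂ.self_of_nhds.continuousAt.eventually_mem hs))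
      (hwℝ.and (hwℝ.self_of_nhds.continuousAt.eventually_mem (hw₀ ▸ hs))) hw₀.symm
  have hw_an : AnalyticAt ℝ (fun t : ℝ => Pi.reCLM ι (w t)) t₀ :=
    (Pi.reCLM ι).analyticAt _ |>.comp <|
      (Complex.analyticAt_iff_eventually_differentiableAt.2 (hw.mono fun _ h => h.differentiableAt)
        |>.restrictScalars).comp (Complex.ofRealCLM.analyticAt t₀)
  exact hw_an.congr (heq.mono fun t ht => by simp [← ht])

theorem antitoneOn_comp_of_fderiv_apply_nonpos {E : Type*} [NormedAddCommGroup E]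
    [NormedSpace ℝ E] {V : E → ℝ} {f : E → E} {γ : ℝ → E} {a : ℝ} (hV : Differentiable ℝ V)
    (hVf : ∀ x, fderiv ℝ V x (f x) ≤ 0) (hγ : ∀ t ≥ a, HasDerivAt γ (f (γ t)) t) :
    AntitoneOn (V ∘ γ) (Ici a) := by
  have hderiv (t) (ht : t ∈ Ici a) : HasDerivAt (V ∘ γ) (fderiv ℝ V (γ t) (f (γ t))) t :=
    (hV _).hasFDerivAt.comp_hasDerivAt t (hγ t ht)
  refine antitoneOn_of_hasDerivWithinAt_nonpos (f' := fun t => fderiv ℝ V (γ t) (f (γ t)))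
    (convex_Ici a) (fun t ht => (hderiv t ht).continuousAt.continuousWithinAt) (fun t ht => ?_)
    fun t _ => hVf (γ t)
  rw [interior_Ici] at ht
  exact (hderiv t (mem_Ici.2 ht.le)).hasDerivWithinAt

theorem AnalyticOnNhd.strictAntiOn_of_antitoneOn {g : ℝ → ℝ} {a L : ℝ}
    (hg : AnalyticOnNhd ℝ g (Ioi a)) (hmono : AntitoneOn g (Ici a))
    (hlim : Tendsto g atTop (𝓝 L)) (hne : ∃ τ > a, g τ ≠ L) : StrictAntiOn g (Ici a) := by
  intro s hs t ht hst
  refine (hmono hs ht hst.le).lt_of_ne fun heq => ?_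
  have hconst : EqOn g (fun _ => g s) (Ioi a) := by
    refine hg.eqOn_of_preconnected_of_eventuallyEq analyticOnNhd_const isPreconnected_Ioi
      (z₀ := (s + t) / 2) (by simp only [mem_Ioi, mem_Ici] at hs ⊢; linarith) ?_
    filter_upwards [Ioo_mem_nhds (by linarith : s < (s + t) / 2) (by linarith : (s + t) / 2 < t)]
      with τ hτ
    exact le_antisymm (hmono hs (mem_Ici.2 (hs.trans hτ.1.le)) hτ.1.le)
      (heq ▸ hmono (mem_Ici.2 (hs.trans hτ.1.le)) ht hτ.2.le)
  have hL : g s = L := tendsto_nhds_unique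
    (tendsto_const_nhds.congr' (eventually_gt_atTop a |>.mono fun τ hτ => (hconst hτ).symm)) hlim
  obtain ⟨τ, hτ, hgτ⟩ := hne
  exact hgτ (hconst hτ ▸ hL)

theorem weak_lyapunov_strictly_decreasing_along_analytic_GAS_flow_general
    (d : ℕ) (f : (Fin d → ℝ) → (Fin d → ℝ))
    -- f is analytic and vanishes at the origin
    (hanal : ∀ x : Fin d → ℝ, AnalyticAt ℝ f x)
    (P : Matrix (Fin d) (Fin d) ℝ) (hPpos : P.PosDef)
    -- the (forward complete) flow of f
    (Φ : (Fin d → ℝ) → ℝ → (Fin d → ℝ))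
    (hΦ0 : ∀ x, Φ x 0 = x)
    (hΦ : ∀ x, ∀ t ≥ (0:ℝ), HasDerivAt (Φ x) (f (Φ x t)) t)
    -- … and convergence of every solution to the origin
    (hattr : ∀ x, Tendsto (Φ x) atTop (nhds (0 : Fin d → ℝ)))
    -- V(x) = xᵀPx is a weak Lyapunov function: dV(x)·f(x) ≤ 0
    (hLyap : ∀ x : Fin d → ℝ, fderiv ℝ (fun y : Fin d → ℝ => y ⬝ᵥ P.mulVec y) x (f x) ≤ 0) :
    ∀ x : Fin d → ℝ, x ≠ 0 → ∀ s t : ℝ, 0 ≤ s → s < t →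
      (Φ x t) ⬝ᵥ P.mulVec (Φ x t) < (Φ x s) ⬝ᵥ P.mulVec (Φ x s) := by
  intro x hx s t hs hst
  set V : (Fin d → ℝ) → ℝ := fun y => y ⬝ᵥ P *ᵥ y
  have hV : AnalyticOnNhd ℝ V univ :=
    contDiff_omega_iff_analyticOnNhd.1 (by simp only [V, dotProduct, mulVec]; fun_prop)
  have hΦ_an : AnalyticOnNhd ℝ (Φ x) (Ioi 0) := fun τ hτ =>
    IsIntegralCurveAt.analyticAt (eventually_of_mem (Ioi_mem_nhds hτ) fun t ht =>
      hΦ x t (le_of_lt ht)) (hanal _)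
  have hlim : Tendsto (V ∘ Φ x) atTop (𝓝 0) := by
    simpa [V] using (hV 0 trivial).continuousAt.tendsto.comp (hattr x)
  have hne : ∃ τ > 0, (V ∘ Φ x) τ ≠ 0 := by
    obtain ⟨τ, hτ, hΦτ⟩ := ((hΦ x 0 le_rfl).continuousAt.eventually_ne (hΦ0 x ▸ hx)).exists_gt
    exact ⟨τ, hτ, (hPpos.dotProduct_mulVec_pos hΦτ).ne'⟩
  exact AnalyticOnNhd.strictAntiOn_of_antitoneOn (fun τ hτ => (hV _ trivial).comp (hΦ_an τ hτ))
    (antitoneOn_comp_of_fderiv_apply_nonpos (fun y => (hV y trivial).differentiableAt) hLyap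
      (hΦ x)) hlim hne hs (mem_Ici.2 (hs.trans hst.le)) hst

/-- Let `f` be an analytic vector field on `ℝ^d` with `f(0) = 0`,
globally asymptotically stable at the origin, and let `V(x) = xᵀPx` (`P` symmetric
positive definite) be a weak Lyapunov function for `f` (`dV(x)·f(x) ≤ 0`). Then `V`
is strictly decreasing along every nonzero solution: for `x ≠ 0` and `0 ≤ s < t`,
`V(Φ^t(x)) < V(Φ^s(x))`. -/
theorem weak_lyapunov_strictly_decreasing_along_analytic_GAS_flow
    (d : ℕ) (f : (Fin d → ℝ) → (Fin d → ℝ))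
    -- f is analytic and vanishes at the origin
    (hanal : ∀ x : Fin d → ℝ, AnalyticAt ℝ f x)
    (hzero : f 0 = 0)
    (P : Matrix (Fin d) (Fin d) ℝ) (hP : P.IsSymm) (hPpos : P.PosDef)
    -- the (forward complete) flow of f
    (Φ : (Fin d → ℝ) → ℝ → (Fin d → ℝ))
    (hΦ0 : ∀ x, Φ x 0 = x)
    (hΦ : ∀ x, ∀ t ≥ (0:ℝ), HasDerivAt (Φ x) (f (Φ x t)) t)
    -- global asymptotic stability: Lyapunov stability of the origin …
    (hstab : ∀ ε > (0:ℝ), ∃ η > (0:ℝ), ∀ x : Fin d → ℝ, ‖x‖ < η →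
      ∀ t ≥ (0:ℝ), ‖Φ x t‖ < ε)
    -- … and convergence of every solution to the origin
    (hattr : ∀ x, Tendsto (Φ x) atTop (nhds (0 : Fin d → ℝ)))
    -- V(x) = xᵀPx is a weak Lyapunov function: dV(x)·f(x) ≤ 0
    (hLyap : ∀ x : Fin d → ℝ, fderiv ℝ (fun y : Fin d → ℝ => y ⬝ᵥ P.mulVec y) x (f x) ≤ 0) :
    ∀ x : Fin d → ℝ, x ≠ 0 → ∀ s t : ℝ, 0 ≤ s → s < t →
      (Φ x t) ⬝ᵥ P.mulVec (Φ x t) < (Φ x s) ⬝ᵥ P.mulVec (Φ x s) :=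
  weak_lyapunov_strictly_decreasing_along_analytic_GAS_flow_general d f hanal P hPpos Φ hΦ0 hΦ hattr
    hLyap
end

section
/- Let f : ℝ^d → ℝ^d satisfy f(0) = 0 and be differentiable at 0 with derivative B (so f(x) = Bx + o(‖x‖)), and let V : ℝ^d → ℝ be twice continuously differentiable with V(0) = 0, dV(0) = 0 and positive definite Hessian H at the origin. If V is a weak Lyapunov function for f, i.e. dV(x)·f(x) ≤ 0 for all x ∈ ℝ^d, then the quadratic function x ↦ ‖x‖_H² = ½ xᵀHx is a weak Lyapunov function for the linearization B, i.e. xᵀHBx ≤ 0 for all x ∈ ℝ^d. -/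
open Matrix Filter Topology

section RayLimits

variable {E F : Type*} [NormedAddCommGroup E] [NormedSpace ℝ E]
  [NormedAddCommGroup F] [NormedSpace ℝ F]

theorem HasFDerivAt.tendsto_inv_smul_comp_smul {g : E → F} {g' : E →L[ℝ] F}
    (hg : HasFDerivAt g g' 0) (hg0 : g 0 = 0) (x : E) :
    Tendsto (fun t : ℝ => t⁻¹ • g (t • x)) (𝓝[≠] 0) (𝓝 (g' x)) := by
  have hray : HasDerivAt (fun t : ℝ => g (t • x)) (g' x) 0 := by
    have hg' : HasFDerivAt g g' ((0 : ℝ) • x) := by rwa [zero_smul]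
    exact hg'.comp_hasDerivAt (0 : ℝ) (by simpa using (hasDerivAt_id (0 : ℝ)).smul_const x)
  refine (hasDerivAt_iff_tendsto_slope.1 hray).congr fun t => ?_
  simp [slope, hg0]

/-- Blowing up `Φ x (f x) ≤ 0` along the ray through `x` by `t⁻²` passes the sign to the
second-order term `Φ' x (f' x)`. -/
theorem apply_linearization_nonpos {f : E → E} {f' : E →L[ℝ] E} {Φ : E → E →L[ℝ] ℝ}
    {Φ' : E →L[ℝ] E →L[ℝ] ℝ} (hf : HasFDerivAt f f' 0) (hf0 : f 0 = 0)
    (hΦ : HasFDerivAt Φ Φ' 0) (hΦ0 : Φ 0 = 0) (hnonpos : ∀ x, Φ x (f x) ≤ 0) (x : E) :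
    Φ' x (f' x) ≤ 0 := by
  have hlim : Tendsto (fun t : ℝ => (t⁻¹ • Φ (t • x)) (t⁻¹ • f (t • x))) (𝓝[≠] 0)
      (𝓝 (Φ' x (f' x))) :=
    (isBoundedBilinearMap_apply.continuous.tendsto (Φ' x, f' x)).comp
      ((hΦ.tendsto_inv_smul_comp_smul hΦ0 x).prodMk_nhds (hf.tendsto_inv_smul_comp_smul hf0 x))
  refine le_of_tendsto hlim (Eventually.of_forall fun t => ?_)
  have hscale : (t⁻¹ • Φ (t • x)) (t⁻¹ • f (t • x)) = (t⁻¹ * t⁻¹) * Φ (t • x) (f (t • x)) := by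
    simp only [_root_.smul_apply, map_smul, smul_eq_mul]
    ring
  rw [hscale]
  exact mul_nonpos_of_nonneg_of_nonpos (mul_self_nonneg _) (hnonpos (t • x))

end RayLimits

theorem hessian_quadratic_is_weak_lyapunov_for_linearization_general
    (d : ℕ) (f : (Fin d → ℝ) → (Fin d → ℝ))
    (hf0 : f 0 = 0)
    -- f is differentiable at 0 with derivative B
    (B : (Fin d → ℝ) →L[ℝ] (Fin d → ℝ))
    (hfB : HasFDerivAt f B 0)
    (V : (Fin d → ℝ) → ℝ)
    (hV : ContDiff ℝ 2 V)
    (hdV0 : fderiv ℝ V 0 = 0)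
    (H : Matrix (Fin d) (Fin d) ℝ)
    -- H is the Hessian of V at the origin
    (hHess : ∀ x y : Fin d → ℝ, (iteratedFDeriv ℝ 2 V 0) ![x, y] = x ⬝ᵥ H.mulVec y)
    -- V is a weak Lyapunov function for f
    (hLyap : ∀ x : Fin d → ℝ, fderiv ℝ V x (f x) ≤ 0) :
    ∀ x : Fin d → ℝ, x ⬝ᵥ H.mulVec (B x) ≤ 0 := by
  intro x
  have hdV : HasFDerivAt (fderiv ℝ V) (fderiv ℝ (fderiv ℝ V) 0) 0 :=
    ((hV.fderiv_right (m := 1) le_rfl).differentiable one_ne_zero 0).hasFDerivAt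
  rw [← hHess, iteratedFDeriv_two_apply]
  exact apply_linearization_nonpos hfB hf0 hdV hdV0 hLyap x

/-- Let `f(0) = 0` with derivative `B` at the origin, and let `V`
be `C²` with `V(0) = 0`, `dV(0) = 0` and positive definite Hessian `H` at the
origin. If `V` is a weak Lyapunov function for `f` (`dV(x)·f(x) ≤ 0` everywhere),
then `x ↦ ½ xᵀHx` is a weak Lyapunov function for the linearization `B`:
`xᵀHBx ≤ 0` for all `x`. -/
theorem hessian_quadratic_is_weak_lyapunov_for_linearization
    (d : ℕ) (f : (Fin d → ℝ) → (Fin d → ℝ))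
    (hf0 : f 0 = 0)
    -- f is differentiable at 0 with derivative B
    (B : (Fin d → ℝ) →L[ℝ] (Fin d → ℝ))
    (hfB : HasFDerivAt f B 0)
    (V : (Fin d → ℝ) → ℝ)
    (hV : ContDiff ℝ 2 V)
    (hV0 : V 0 = 0)
    (hdV0 : fderiv ℝ V 0 = 0)
    (H : Matrix (Fin d) (Fin d) ℝ) (hHpos : H.PosDef)
    -- H is the Hessian of V at the origin
    (hHess : ∀ x y : Fin d → ℝ, (iteratedFDeriv ℝ 2 V 0) ![x, y] = x ⬝ᵥ H.mulVec y)
    -- V is a weak Lyapunov function for f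
    (hLyap : ∀ x : Fin d → ℝ, fderiv ℝ V x (f x) ≤ 0) :
    ∀ x : Fin d → ℝ, x ⬝ᵥ H.mulVec (B x) ≤ 0 :=
  hessian_quadratic_is_weak_lyapunov_for_linearization_general d f hf0 B hfB V hV hdV0 H hHess hLyap
end

section
/- Every input u : [0, ∞) → {1, …, p} that has an average dwell-time is nonchaotic: if there exist δ > 0 and N₀ > 0 such that the number N(t, t+τ) of discontinuities of u in any open interval (t, t+τ) is at most N₀ + τ/δ, then there do NOT exist τ > 0 and a sequence of intervals [t_k, t_k + τ] with t_k → ∞ such that for every ε > 0 there is k₀ with: for all k ≥ k₀, u is constant on no subinterval of [t_k, t_k + τ] of length ≥ ε. -/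
open Filter Set Topology

/-- `u` switches (is discontinuous) at time `t`: it is not locally constant at `t`. -/
def SwitchAt {p : ℕ} (u : ℝ → Fin p) (t : ℝ) : Prop :=
  ¬ ∀ᶠ s in nhds t, u s = u t

/-- `u` is chaotic: there are `τ > 0` and intervals `[t_k, t_k + τ]` with
`t_k → +∞` such that for every `ε > 0`, eventually (in `k`) `u` is constant on no
subinterval of `[t_k, t_k + τ]` of length `≥ ε`. -/
def IsChaotic {p : ℕ} (u : ℝ → Fin p) : Prop :=
  ∃ τ > (0:ℝ), ∃ tk : ℕ → ℝ, (∀ k, 0 ≤ tk k) ∧ Tendsto tk atTop atTop ∧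
    ∀ ε > (0:ℝ), ∃ k₀ : ℕ, ∀ k ≥ k₀, ∀ a b : ℝ,
      tk k ≤ a → b ≤ tk k + τ → ε ≤ b - a → ¬ ∀ s ∈ Set.Icc a b, u s = u a

/-- If `u` has no switch on `[a,b]`, then `u` is constant on `[a,b]`. -/
lemma const_of_no_switch {p : ℕ} (u : ℝ → Fin p) (a b : ℝ)
    (h : ∀ s ∈ Set.Icc a b, ¬ SwitchAt u s) (hab : a ≤ b) :
    ∀ s ∈ Set.Icc a b, u s = u a := by
  have : PreconnectedSpace (Set.Icc a b) := Subtype.preconnectedSpace isPreconnected_Icc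
  have hlc : IsLocallyConstant (fun x : Set.Icc a b => u x) := by
    rw [IsLocallyConstant.iff_eventually_eq]
    intro x
    have hx : ∀ᶠ s in nhds (x : ℝ), u s = u x := not_not.mp (h x x.2)
    exact (continuous_subtype_val.continuousAt).eventually hx
  intro s hs
  exact hlc.apply_eq_of_preconnectedSpace ⟨s, hs⟩ ⟨a, by constructor <;> simp [hab]⟩

/-- Every (piecewise constant, right-continuous) input with an
average dwell-time is nonchaotic. -/
theorem average_dwell_time_implies_nonchaotic
    (p : ℕ) (u : ℝ → Fin p)
    -- u is a right-continuous input
    (hrc : ∀ t : ℝ, ∀ᶠ s in nhdsWithin t (Set.Ici t), u s = u t)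
    -- u has average dwell-time δ with chatter bound N₀
    (δ N₀ : ℝ) (hδ : 0 < δ) (hN₀ : 0 < N₀)
    (havg : ∀ t ≥ (0:ℝ), ∀ τ > (0:ℝ),
      {s : ℝ | s ∈ Set.Ioo t (t + τ) ∧ SwitchAt u s}.Finite ∧
      (({s : ℝ | s ∈ Set.Ioo t (t + τ) ∧ SwitchAt u s}.ncard : ℝ)) ≤ N₀ + τ / δ) :
    ¬ IsChaotic u := by
  rintro ⟨τ, hτ, tk, htk0, htop, hch⟩
  set n : ℕ := ⌈N₀ + τ / δ⌉₊ with hn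
  set ℓ : ℝ := τ / (n + 3) with hℓdef
  have hℓ : 0 < ℓ := by positivity
  obtain ⟨k₀, hk₀⟩ := hch (ℓ / 2) (by positivity)
  set t : ℝ := tk k₀ with ht
  obtain ⟨hfin, hcard⟩ := havg t (htk0 k₀) τ hτ
  set S : Set ℝ := {s : ℝ | s ∈ Set.Ioo t (t + τ) ∧ SwitchAt u s} with hS
  have hcardn : S.ncard ≤ n := by
    have h1 : (S.ncard : ℝ) ≤ (n : ℝ) := hcard.trans (Nat.le_ceil _)
    exact_mod_cast h1
  -- there is a subinterval with no switching
  have hkey : ∃ i : ℕ, i < n + 1 ∧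
      ∀ x ∈ Set.Ico (t + (i + 1) * ℓ) (t + (i + 2) * ℓ), ¬ SwitchAt u x := by
    by_contra hcon
    push_neg at hcon
    have hcon' : ∀ i : Fin (n + 1), ∃ x,
        x ∈ Set.Ico (t + ((i : ℕ) + 1) * ℓ) (t + ((i : ℕ) + 2) * ℓ) ∧ SwitchAt u x := by
      intro i
      obtain ⟨x, hx1, hx2⟩ := hcon i i.2
      exact ⟨x, hx1, hx2⟩
    choose f hmem hsw using hcon'
    have hbound : ∀ i : Fin (n + 1), ((i : ℕ) + 2 : ℝ) * ℓ ≤ τ := by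
      intro i
      have hi : ((i : ℕ) : ℝ) ≤ (n : ℝ) := by exact_mod_cast Nat.lt_succ_iff.mp i.2
      have hnℓ : ((n : ℝ) + 3) * ℓ = τ := by rw [hℓdef]; field_simp
      nlinarith [hℓ]
    have hfS : ∀ i : Fin (n + 1), f i ∈ S := by
      intro i
      refine ⟨⟨?_, ?_⟩, hsw i⟩
      · have := (hmem i).1
        nlinarith [hℓ, (i : ℕ).cast_nonneg (α := ℝ)]
      · have h2 := (hmem i).2
        have := hbound i
        linarith
    have hinj : Function.Injective fun i : Fin (n + 1) => (⟨f i, hfin.mem_toFinset.mpr (hfS i)⟩ : hfin.toFinset) := by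
      intro i j hij
      simp only [Subtype.mk.injEq] at hij
      by_contra hne
      rcases Ne.lt_or_gt (fun h : i = j => hne h) with hlt | hlt
      all_goals {
        first
        | (have h1 := (hmem i).2; have h2 := (hmem j).1
           have hij' : ((i : ℕ) : ℝ) + 2 ≤ ((j : ℕ) : ℝ) + 1 := by
             have : (i : ℕ) + 1 ≤ (j : ℕ) := hlt
             exact_mod_cast Nat.add_le_add_right this 1
           have : t + ((i : ℕ) + 2) * ℓ ≤ t + ((j : ℕ) + 1) * ℓ := by nlinarith
           rw [hij] at h1; linarith)
        | (have h1 := (hmem j).2; have h2 := (hmem i).1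
           have hij' : ((j : ℕ) : ℝ) + 2 ≤ ((i : ℕ) : ℝ) + 1 := by
             have : (j : ℕ) + 1 ≤ (i : ℕ) := hlt
             exact_mod_cast Nat.add_le_add_right this 1
           have : t + ((j : ℕ) + 2) * ℓ ≤ t + ((i : ℕ) + 1) * ℓ := by nlinarith
           rw [← hij] at h1; linarith)
      }
    have hle := Fintype.card_le_of_injective _ hinj
    simp only [Fintype.card_fin, Fintype.card_coe] at hle
    rw [← Set.ncard_eq_toFinset_card S hfin] at hle
    omega
  obtain ⟨i, hi, hnosw⟩ := hkey
  set a : ℝ := t + (i + 1) * ℓ with hadef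
  set b : ℝ := a + ℓ / 2 with hbdef
  have hIcc : Set.Icc a b ⊆ Set.Ico (t + (i + 1) * ℓ) (t + (i + 2) * ℓ) := by
    intro x hx
    constructor
    · exact hx.1
    · have := hx.2
      rw [hbdef, hadef] at this
      nlinarith
  have hconst : ∀ s ∈ Set.Icc a b, u s = u a :=
    const_of_no_switch u a b (fun s hs => hnosw s (hIcc hs)) (by rw [hbdef]; linarith)
  refine hk₀ k₀ le_rfl a b ?_ ?_ ?_ hconst
  · rw [hadef]; nlinarith [hℓ, (i : ℕ).cast_nonneg (α := ℝ)]
  · have hin : ((i : ℝ) + 2) * ℓ ≤ τ := by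
      have hi' : (i : ℝ) ≤ (n : ℝ) := by exact_mod_cast Nat.lt_succ_iff.mp hi
      have hnℓ : ((n : ℝ) + 3) * ℓ = τ := by rw [hℓdef]; field_simp
      nlinarith [hℓ]
    rw [hbdef, hadef]
    nlinarith
  · rw [hbdef]; linarith
end

section
/- Every nonchaotic input has a persistent dwell-time: if u : [0, ∞) → {1, …, p} is a piecewise constant, right-continuous input which is not chaotic, then there exist an increasing sequence of times (t_k)_{k≥0} tending to +∞ and positive numbers δ and T such that u is constant on each interval [t_k, t_k + δ) and t_{k+1} − t_k ≤ T for all k ≥ 0. -/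
open Filter Set Topology

/-- Every nonchaotic (piecewise constant, right-continuous) input
has a persistent dwell-time: there exist times `t_k` increasing to `+∞`, a
persistent dwell-time `δ > 0` and a period of persistence `T > 0` such that `u` is
constant on each `[t_k, t_k + δ)` and `t_{k+1} - t_k ≤ T`. -/
theorem nonchaotic_implies_persistent_dwell_time
    (p : ℕ) (u : ℝ → Fin p)
    -- u is a piecewise constant right-continuous input:
    (hrc : ∀ t : ℝ, ∀ᶠ s in nhdsWithin t (Set.Ici t), u s = u t)
    (hpcw : ∀ T : ℝ, {t : ℝ | t ∈ Set.Icc 0 T ∧ SwitchAt u t}.Finite)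
    -- u is nonchaotic
    (hnc : ¬ IsChaotic u) :
    ∃ (tk : ℕ → ℝ) (δ T : ℝ), 0 < δ ∧ 0 < T ∧
      (∀ k, 0 ≤ tk k) ∧ StrictMono tk ∧ Tendsto tk atTop atTop ∧
      (∀ k : ℕ, ∀ s ∈ Set.Ico (tk k) (tk k + δ), u s = u (tk k)) ∧
      (∀ k : ℕ, tk (k + 1) - tk k ≤ T) := by
  classical
  by_cases h : ∃ δ > (0:ℝ), ∃ T > (0:ℝ), ∀ s ≥ (0:ℝ), ∃ t, s ≤ t ∧ t ≤ s + T ∧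
      ∀ x ∈ Set.Ico t (t + δ), u x = u t
  · obtain ⟨δ, hδ, T, hT, hP⟩ := h
    -- choice function
    let F : ℝ → ℝ := fun s => if hs : 0 ≤ s then (hP s hs).choose else 0
    have hF : ∀ s : ℝ, 0 ≤ s → s ≤ F s ∧ F s ≤ s + T ∧
        ∀ x ∈ Set.Ico (F s) (F s + δ), u x = u (F s) := by
      intro s hs
      simp only [F, dif_pos hs]
      exact (hP s hs).choose_spec
    let tk : ℕ → ℝ := fun k => Nat.rec (F 0) (fun _ t => F (t + δ)) k
    have htk0 : ∀ k, 0 ≤ tk k := by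
      intro k
      induction k with
      | zero => exact (hF 0 le_rfl).1
      | succ n ih =>
        have h1 : (0:ℝ) ≤ tk n + δ := by linarith
        have := (hF (tk n + δ) h1).1
        calc (0:ℝ) ≤ tk n + δ := h1
          _ ≤ F (tk n + δ) := this
          _ = tk (n + 1) := rfl
    have hstep : ∀ k, tk k + δ ≤ tk (k + 1) ∧ tk (k + 1) ≤ tk k + δ + T := by
      intro k
      have h1 : (0:ℝ) ≤ tk k + δ := by have := htk0 k; linarith
      exact ⟨(hF (tk k + δ) h1).1, (hF (tk k + δ) h1).2.1⟩
    refine ⟨tk, δ, δ + T, hδ, by linarith, htk0, ?_, ?_, ?_, ?_⟩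
    · apply strictMono_nat_of_lt_succ
      intro n
      have := (hstep n).1
      linarith
    · have hlb : ∀ k : ℕ, tk 0 + k * δ ≤ tk k := by
        intro k
        induction k with
        | zero => simp
        | succ n ih =>
          have := (hstep n).1
          push_cast
          nlinarith
      apply tendsto_atTop_mono hlb
      apply tendsto_atTop_add_const_left
      exact tendsto_natCast_atTop_atTop.atTop_mul_const hδ
    · intro k
      induction k with
      | zero => exact (hF 0 le_rfl).2.2
      | succ n ih =>
        have h1 : (0:ℝ) ≤ tk n + δ := by have := htk0 n; linarith
        exact (hF (tk n + δ) h1).2.2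
    · intro k
      have := (hstep k).2
      linarith
  · exfalso
    apply hnc
    push_neg at h
    -- for each k, get a bad window of length k+2 where no (1/(k+1))-dwell occurs
    have hk : ∀ k : ℕ, ∃ s ≥ (0:ℝ), ∀ t, s ≤ t → t ≤ s + (k + 2) →
        ∃ x ∈ Set.Ico t (t + 1 / (k + 1)), u x ≠ u t := by
      intro k
      have h1 : (0:ℝ) < 1 / (k + 1) := by positivity
      have h2 : (0:ℝ) < (k:ℝ) + 2 := by positivity
      obtain ⟨s, hs, hbad⟩ := h (1 / (k + 1)) h1 ((k:ℝ) + 2) h2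
      exact ⟨s, hs, fun t h₁ h₂ => hbad t h₁ h₂⟩
    choose s hs0 hsbad using hk
    refine ⟨1, one_pos, fun k => s k + (k + 1), fun k => by have := hs0 k; positivity, ?_, ?_⟩
    · have hlb : ∀ k : ℕ, (k : ℝ) ≤ s k + (k + 1) := by
        intro k; have := hs0 k; linarith
      exact tendsto_atTop_mono hlb tendsto_natCast_atTop_atTop
    · intro ε hε
      obtain ⟨k₀, hk₀⟩ := exists_nat_one_div_lt hε
      refine ⟨k₀, fun k hk a b ha hb hab hconst => ?_⟩
      have ha' : s k + ((k:ℝ) + 1) ≤ a := ha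
      have hb' : b ≤ s k + ((k:ℝ) + 1) + 1 := hb
      have h1 : s k ≤ a := by linarith [hs0 k]
      have h2 : a ≤ s k + ((k:ℝ) + 2) := by linarith
      obtain ⟨x, hx, hne⟩ := hsbad k a h1 h2
      apply hne
      have hmono : 1 / ((k:ℝ) + 1) ≤ 1 / ((k₀:ℝ) + 1) := by
        apply one_div_le_one_div_of_le
        · positivity
        · exact_mod_cast Nat.succ_le_succ hk
      have hxb : x ≤ b := by
        have := hx.2
        have : x < a + 1 / ((k:ℝ) + 1) := hx.2
        have hlt : x < a + ε := by
          calc x < a + 1 / ((k:ℝ) + 1) := this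
            _ ≤ a + 1 / ((k₀:ℝ) + 1) := by linarith
            _ ≤ a + ε := by linarith [hk₀.le]
        linarith
      exact hconst x ⟨hx.1, hxb⟩
end
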